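/- arXiv:2305.18258 — 2 statements merged into one kernel-verified Lean document; each statement's English description precedes it below -/
import Mathlib

section
/- Let K and H be positive integers and let c > 0, d >= 1, B >= 1, and M >= H be real numbers. Set eta = sqrt(d/(M*B*K)) and eps = 1/sqrt(H*K). Suppose we are given real numbers a_k, b_k, Delta_k for k in {1,...,K} and nonnegative real numbers e(k,h,s) for k in {1,...,K}, h in {1,...,H}, s in {1,...,k-1}, such that: (i) sum_{k=1}^K a_k <= eta * sum_{k=1}^K Delta_k; (ii) for every k, Delta_k <= -c * sum_{h=1}^H sum_{s=1}^{k-1} e(k,h,s) + c*B*M; (iii) for every mu > 0, sum_{k=1}^K b_k <= (mu/2) * sum_{k=1}^K sum_{h=1}^H sum_{s=1}^{k-1} e(k,h,s) + d/(2*mu) + sqrt(d*H*K) + eps*H*K. Then sum_{k=1}^K (a_k + b_k) <= (c + 1/(4*c) + 2) * sqrt(d*M*B*K). -/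
open Finset

/-
Summing the per-episode bound on `Δ` turns the optimism bound into
`∑ aₖ ≤ η (-c S + c M B K)` with `S` the total discrepancy. The generalization bound holds for
every `μ > 0`, and the choice `μ = 2 η c` makes its `S` term cancel the negative one exactly;
with `η = √(d / (M B K))` both remaining terms `c η M B K` and `d / (4 η c)` are multiples of
`√(d M B K)`. The lower-order terms `√(d H K)` and `ε H K = √(H K)` are each at most `√(d M B K)`.
-/

namespace Real

theorem sqrt_div_mul_self (d : ℝ) {P : ℝ} (hP : 0 ≤ P) : √(d / P) * P = √(d * P) := by
  rw [sqrt_div' d hP, sqrt_mul' d hP]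
  nth_rewrite 2 [← mul_self_sqrt hP]
  rcases (sqrt_nonneg P).eq_or_lt with h | h
  · simp [← h]
  · field_simp

theorem div_sqrt_div_self {d : ℝ} (hd : 0 ≤ d) (P : ℝ) : d / √(d / P) = √(d * P) := by
  rw [sqrt_div hd, div_div_eq_mul_div, mul_div_right_comm, div_sqrt, sqrt_mul hd]

end Real

theorem sum_le_neg_mul_sum_add_card_mul {ι : Type*} (s : Finset ι) {f g : ι → ℝ} {c C : ℝ}
    (h : ∀ i ∈ s, f i ≤ -c * g i + C) : ∑ i ∈ s, f i ≤ -c * ∑ i ∈ s, g i + #s * C := by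
  grw [sum_le_sum h, sum_add_distrib, ← mul_sum, sum_const, nsmul_eq_mul]

theorem add_le_of_tuned_tradeoff {x y S d P c R : ℝ} (hd : 0 < d) (hP : 0 < P) (hc : 0 < c)
    (hx : x ≤ √(d / P) * (-c * S + c * P))
    (hy : ∀ μ : ℝ, 0 < μ → y ≤ μ / 2 * S + d / (2 * μ) + R) :
    x + y ≤ (c + 1 / (4 * c)) * √(d * P) + R := by
  set η := √(d / P)
  have hη : 0 < η := Real.sqrt_pos.2 (div_pos hd hP)
  have hx' : x ≤ -(η * c * S) + c * √(d * P) := by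
    rw [← Real.sqrt_div_mul_self d hP.le]; linarith
  have hy' : y ≤ η * c * S + √(d * P) / (4 * c) + R := by
    have hd_div : d / (2 * (2 * η * c)) = √(d * P) / (4 * c) := by
      rw [← Real.div_sqrt_div_self hd.le P]; field_simp; ring
    have := hy (2 * η * c) (by positivity)
    rw [hd_div] at this; linarith
  calc x + y ≤ c * √(d * P) + √(d * P) / (4 * c) + R := by linarith
    _ = (c + 1 / (4 * c)) * √(d * P) + R := by ring

theorem stmt1_general (K H : ℕ) (hK : 0 < K) (hH : 0 < H)
    (c d B M : ℝ) (hc : 0 < c) (hd : 1 ≤ d) (hB : 1 ≤ B) (hM : (H : ℝ) ≤ M)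
    (η eps : ℝ) (hη : η = Real.sqrt (d / (M * B * K)))
    (heps : eps = 1 / Real.sqrt (H * K))
    (a b Δ : ℕ → ℝ) (e : ℕ → ℕ → ℕ → ℝ)
    (h1 : ∑ k ∈ Icc 1 K, a k ≤ η * ∑ k ∈ Icc 1 K, Δ k)
    (h2 : ∀ k ∈ Icc 1 K,
      Δ k ≤ -c * ∑ h ∈ Icc 1 H, ∑ s ∈ Icc 1 (k - 1), e k h s + c * B * M)
    (h3 : ∀ μ : ℝ, 0 < μ →
      ∑ k ∈ Icc 1 K, b k ≤
        μ / 2 * ∑ k ∈ Icc 1 K, ∑ h ∈ Icc 1 H, ∑ s ∈ Icc 1 (k - 1), e k h s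
        + d / (2 * μ) + Real.sqrt (d * H * K) + eps * H * K) :
    ∑ k ∈ Icc 1 K, (a k + b k) ≤
      (c + 1 / (4 * c) + 2) * Real.sqrt (d * M * B * K) := by
  set S := ∑ k ∈ Icc 1 K, ∑ h ∈ Icc 1 H, ∑ s ∈ Icc 1 (k - 1), e k h s
  have hd0 : 0 < d := one_pos.trans_le hd
  have hM0 : 0 < M := (Nat.cast_pos.2 hH).trans_le hM
  have hP : 0 < M * B * K := by positivity
  have hΔ : ∑ k ∈ Icc 1 K, Δ k ≤ -c * S + c * (M * B * K) :=
    (sum_le_neg_mul_sum_add_card_mul _ h2).trans_eq (by rw [Nat.card_Icc]; push_cast; ring)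
  have hab := add_le_of_tuned_tradeoff hd0 hP hc
    (hη ▸ h1.trans (mul_le_mul_of_nonneg_left hΔ (hη ▸ Real.sqrt_nonneg _)))
    fun μ hμ => (h3 μ hμ).trans_eq (add_assoc _ _ _)
  have hHK : (H : ℝ) * K ≤ M * B * K := by
    gcongr; exact hM.trans (le_mul_of_one_le_right hM0.le hB)
  have hdHK : √(d * H * K) ≤ √(d * (M * B * K)) :=
    Real.sqrt_le_sqrt (by rw [mul_assoc]; exact mul_le_mul_of_nonneg_left hHK hd0.le)
  have heps_HK : eps * H * K ≤ √(d * H * K) :=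
    calc eps * H * K = (H * K) / √(H * K) := by rw [heps]; ring
      _ = √(H * K) := Real.div_sqrt
      _ ≤ √(d * H * K) :=
          Real.sqrt_le_sqrt (by rw [mul_assoc]; exact le_mul_of_one_le_left (by positivity) hd)
  rw [sum_add_distrib, show d * M * B * K = d * (M * B * K) by ring]
  linarith

/-- Theorem 4.1 of the paper (online regret of MEX), deterministic form. -/
theorem stmt1 (K H : ℕ) (hK : 0 < K) (hH : 0 < H)
    (c d B M : ℝ) (hc : 0 < c) (hd : 1 ≤ d) (hB : 1 ≤ B) (hM : (H : ℝ) ≤ M)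
    (η eps : ℝ) (hη : η = Real.sqrt (d / (M * B * K)))
    (heps : eps = 1 / Real.sqrt (H * K))
    (a b Δ : ℕ → ℝ) (e : ℕ → ℕ → ℕ → ℝ)
    (he : ∀ k ∈ Icc 1 K, ∀ h ∈ Icc 1 H, ∀ s ∈ Icc 1 (k - 1), 0 ≤ e k h s)
    (h1 : ∑ k ∈ Icc 1 K, a k ≤ η * ∑ k ∈ Icc 1 K, Δ k)
    (h2 : ∀ k ∈ Icc 1 K,
      Δ k ≤ -c * ∑ h ∈ Icc 1 H, ∑ s ∈ Icc 1 (k - 1), e k h s + c * B * M)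
    (h3 : ∀ μ : ℝ, 0 < μ →
      ∑ k ∈ Icc 1 K, b k ≤
        μ / 2 * ∑ k ∈ Icc 1 K, ∑ h ∈ Icc 1 H, ∑ s ∈ Icc 1 (k - 1), e k h s
        + d / (2 * μ) + Real.sqrt (d * H * K) + eps * H * K) :
    ∑ k ∈ Icc 1 K, (a k + b k) ≤
      (c + 1 / (4 * c) + 2) * Real.sqrt (d * M * B * K) :=
  stmt1_general K H hK hH c d B M hc hd hB hM η eps hη heps a b Δ e h1 h2 h3
end

section
/- Let d and K be positive integers, let Lambda_0 be a positive definite real d x d matrix, and let x_1, ..., x_K be vectors in R^d. Define Lambda_k = Lambda_0 + sum_{s=1}^k x_s x_s^T for k in {0,1,...,K}. Then sum_{s=1}^K min{1, x_s^T Lambda_{s-1}^{-1} x_s} <= 2 * log( det(Lambda_K) / det(Lambda_0) ). -/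
/-!
Adding `x xᵀ` to a positive definite `Λ` multiplies `det Λ` by `1 + xᵀ Λ⁻¹ x`
(matrix determinant lemma), so `log det Λ` grows by `log (1 + xᵀ Λ⁻¹ x)` at each step.
Since `min 1 u ≤ 2 log (1 + u)` for `u ≥ 0`, the sum telescopes to the claimed bound.
-/

open Finset Matrix

theorem Real.min_one_le_two_mul_log_one_add {u : ℝ} (hu : 0 ≤ u) :
    min 1 u ≤ 2 * Real.log (1 + u) := by
  have h1u : 0 < 1 + u := by linarith
  have hlog : u / (1 + u) ≤ Real.log (1 + u) :=
    calc u / (1 + u) = 1 - (1 + u)⁻¹ := by field_simp; ring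
      _ ≤ Real.log (1 + u) := Real.one_sub_inv_le_log_of_pos h1u
  have hmin : min 1 u ≤ 2 * (u / (1 + u)) := by
    rw [← mul_div_assoc, le_div_iff₀ h1u]
    rcases le_total u 1 with h | h
    · rw [min_eq_right h]; nlinarith
    · rw [min_eq_left h]; nlinarith
  linarith

namespace Matrix

variable {n : Type*} [Fintype n]

theorem det_add_vecMulVec [DecidableEq n] {α : Type*} [CommRing α] {A : Matrix n n α}
    (hA : IsUnit A.det) (u v : n → α) :
    (A + vecMulVec u v).det = A.det * (1 + v ⬝ᵥ A⁻¹ *ᵥ u) := by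
  rw [vecMulVec_eq Unit, det_add_replicateCol_mul_replicateRow hA, Matrix.mul_assoc,
    ← replicateCol_mulVec, replicateRow_mul_replicateCol]
  simp

namespace PosDef

variable {A : Matrix n n ℝ}

theorem add_vecMulVec_self (hA : A.PosDef) (x : n → ℝ) : (A + vecMulVec x x).PosDef :=
  hA.add_posSemidef (by simpa using posSemidef_vecMulVec_self_star x)

theorem min_one_le_two_mul_log_det_add_vecMulVec_self [DecidableEq n] (hA : A.PosDef)
    (x : n → ℝ) :
    min 1 (x ⬝ᵥ A⁻¹ *ᵥ x) ≤ 2 * (Real.log (A + vecMulVec x x).det - Real.log A.det) := by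
  have hq : 0 ≤ x ⬝ᵥ A⁻¹ *ᵥ x := by
    simpa using hA.inv.posSemidef.dotProduct_mulVec_nonneg x
  rw [det_add_vecMulVec hA.det_pos.ne'.isUnit,
    Real.log_mul hA.det_pos.ne' (by positivity), add_sub_cancel_left]
  exact Real.min_one_le_two_mul_log_one_add hq

end PosDef

section RankOneUpdates

variable {Λ : ℕ → Matrix n n ℝ} {x : ℕ → n → ℝ}

theorem posDef_of_add_vecMulVec_self (hΛ₀ : (Λ 0).PosDef)
    (hΛ : ∀ k, Λ (k + 1) = Λ k + vecMulVec (x (k + 1)) (x (k + 1))) (k : ℕ) :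
    (Λ k).PosDef := by
  induction k with
  | zero => exact hΛ₀
  | succ k ih => exact hΛ k ▸ ih.add_vecMulVec_self _

theorem sum_min_one_le_two_mul_log_det_sub [DecidableEq n] (hΛ₀ : (Λ 0).PosDef)
    (hΛ : ∀ k, Λ (k + 1) = Λ k + vecMulVec (x (k + 1)) (x (k + 1))) (K : ℕ) :
    ∑ s ∈ Icc 1 K, min 1 (x s ⬝ᵥ (Λ (s - 1))⁻¹ *ᵥ x s) ≤
      2 * (Real.log (Λ K).det - Real.log (Λ 0).det) := by
  induction K with
  | zero => simp
  | succ K ih =>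
    have hstep := PosDef.min_one_le_two_mul_log_det_add_vecMulVec_self
      (posDef_of_add_vecMulVec_self hΛ₀ hΛ K) (x (K + 1))
    rw [← hΛ] at hstep
    rw [sum_Icc_succ_top (by omega), Nat.add_sub_cancel]
    linarith

end RankOneUpdates

end Matrix

theorem stmt5_general (d K : ℕ)
    (Λ₀ : Matrix (Fin d) (Fin d) ℝ) (hΛ₀ : Λ₀.PosDef)
    (x : ℕ → Fin d → ℝ)
    (Λ : ℕ → Matrix (Fin d) (Fin d) ℝ)
    (hΛ : ∀ k, Λ k = Λ₀ + ∑ s ∈ Icc 1 k, vecMulVec (x s) (x s)) :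
    ∑ s ∈ Icc 1 K, min 1 (x s ⬝ᵥ (Λ (s - 1))⁻¹ *ᵥ x s) ≤
      2 * Real.log ((Λ K).det / Λ₀.det) := by
  have hΛ0 : Λ 0 = Λ₀ := by simp [hΛ 0]
  have hstep : ∀ k, Λ (k + 1) = Λ k + vecMulVec (x (k + 1)) (x (k + 1)) := fun k => by
    rw [hΛ, hΛ, sum_Icc_succ_top (by omega), add_assoc]
  have hpos : (Λ 0).PosDef := hΛ0 ▸ hΛ₀
  rw [← hΛ0, Real.log_div (posDef_of_add_vecMulVec_self hpos hstep K).det_pos.ne'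
    hpos.det_pos.ne']
  exact sum_min_one_le_two_mul_log_det_sub hpos hstep K

/-- Elliptical potential lemma (Lemma C.3 of the paper). -/
theorem stmt5 (d K : ℕ) (hd : 0 < d) (hK : 0 < K)
    (Λ₀ : Matrix (Fin d) (Fin d) ℝ) (hΛ₀ : Λ₀.PosDef)
    (x : ℕ → Fin d → ℝ)
    (Λ : ℕ → Matrix (Fin d) (Fin d) ℝ)
    (hΛ : ∀ k, Λ k = Λ₀ + ∑ s ∈ Icc 1 k, vecMulVec (x s) (x s)) :
    ∑ s ∈ Icc 1 K, min 1 (x s ⬝ᵥ (Λ (s - 1))⁻¹ *ᵥ x s) ≤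
      2 * Real.log ((Λ K).det / Λ₀.det) :=
  stmt5_general d K Λ₀ hΛ₀ x Λ hΛ
end
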